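/- arXiv:2212.14641 — 8 statements merged into one kernel-verified Lean document; each statement's English description precedes it below -/
import Mathlib

section
/- Let M > 0, τ > 0 with τ²M² < 1, and 0 < λ < √(1 − τ²M²). Then the Volterra reservoir map F(x, z) = λ x ⊗ z̃ + 1 on the double tensor algebra is a contraction in its state variable: for all states x, y in the Hilbert space T₂(R^d) and all z ∈ R^d with ‖z‖ ≤ M, ‖F(x,z) − F(y,z)‖ ≤ (λ/√(1 − τ²M²)) ‖x − y‖, and λ/√(1 − τ²M²) < 1. -/
theorem norm_smul_apply_add_sub_smul_apply_add {𝕜 E F G : Type*} [NormedField 𝕜]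
    [SeminormedAddCommGroup E] [NormedSpace 𝕜 E] [SeminormedAddCommGroup F] [NormedSpace 𝕜 F]
    [SeminormedAddCommGroup G] [NormedSpace 𝕜 G]
    (B : E →L[𝕜] F →L[𝕜] G) (hB : ∀ x y, ‖B x y‖ = ‖x‖ * ‖y‖) (c : 𝕜) (w : F) (b : G)
    (x y : E) :
    ‖(c • B x w + b) - (c • B y w + b)‖ = ‖c‖ * ‖w‖ * ‖x - y‖ := by
  rw [add_sub_add_right_eq_sub, ← smul_sub, ← sub_apply, ← map_sub,
    norm_smul, hB]
  ring

theorem le_inv_sqrt_of_sq_eq_one_div {τ M r t : ℝ} (hS : 0 < 1 - τ ^ 2 * M ^ 2)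
    (hr : 0 ≤ r) (hrM : r ≤ M) (ht : 0 ≤ t) (h : t ^ 2 = 1 / (1 - τ ^ 2 * r ^ 2)) :
    t ≤ (Real.sqrt (1 - τ ^ 2 * M ^ 2))⁻¹ := by
  have hrM2 : 1 - τ ^ 2 * M ^ 2 ≤ 1 - τ ^ 2 * r ^ 2 := by gcongr
  calc t = Real.sqrt (1 / (1 - τ ^ 2 * r ^ 2)) := by rw [← h, Real.sqrt_sq ht]
    _ ≤ Real.sqrt (1 / (1 - τ ^ 2 * M ^ 2)) :=
        Real.sqrt_le_sqrt (one_div_le_one_div_of_le hS hrM2)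
    _ = (Real.sqrt (1 - τ ^ 2 * M ^ 2))⁻¹ := by rw [one_div, Real.sqrt_inv]

theorem volterra_reservoir_contraction_general {d : ℕ} (M τ lam : ℝ)
    (hlam0 : 0 < lam) (hlam : lam < Real.sqrt (1 - τ ^ 2 * M ^ 2))
    (H : Type*) [NormedAddCommGroup H] [NormedSpace ℝ H]
    (otimes : H →L[ℝ] H →L[ℝ] H) (hmult : ∀ x y : H, ‖otimes x y‖ = ‖x‖ * ‖y‖)
    (one : H) (tilde : EuclideanSpace ℝ (Fin d) → H)
    (htilde : ∀ v : EuclideanSpace ℝ (Fin d), ‖v‖ ≤ M →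
      ‖tilde v‖ ^ 2 = 1 / (1 - τ ^ 2 * ‖v‖ ^ 2)) :
    (∀ (x y : H) (z : EuclideanSpace ℝ (Fin d)), ‖z‖ ≤ M →
      ‖(lam • otimes x (tilde z) + one) - (lam • otimes y (tilde z) + one)‖ ≤
        (lam / Real.sqrt (1 - τ ^ 2 * M ^ 2)) * ‖x - y‖) ∧
      lam / Real.sqrt (1 - τ ^ 2 * M ^ 2) < 1 := by
  have hsqrt : 0 < Real.sqrt (1 - τ ^ 2 * M ^ 2) := hlam0.trans hlam
  refine ⟨fun x y z hz => ?_, (div_lt_one hsqrt).mpr hlam⟩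
  have htilde_le : ‖tilde z‖ ≤ (Real.sqrt (1 - τ ^ 2 * M ^ 2))⁻¹ :=
    le_inv_sqrt_of_sq_eq_one_div (Real.sqrt_pos.mp hsqrt) (norm_nonneg z) hz
      (norm_nonneg _) (htilde z hz)
  rw [norm_smul_apply_add_sub_smul_apply_add otimes hmult, Real.norm_of_nonneg hlam0.le,
    div_eq_mul_inv]
  gcongr

/-- The Volterra reservoir map `F(x, z) = λ x ⊗ z̃ + 1` on the double tensor
algebra `T₂(ℝ^d)` is a contraction in its state variable with constant
`λ/√(1 - τ²M²) < 1`.  The Hilbert space `T₂(ℝ^d)` is abstracted as a normed space `H`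
equipped with a continuous bilinear tensor product `otimes` satisfying
`‖x ⊗ y‖ = ‖x‖·‖y‖`, a unit `one`, and the τ-tensorization map `tilde` satisfying
`‖z̃‖² = 1/(1 - τ²‖z‖²)` for `‖z‖ ≤ M`. -/
theorem volterra_reservoir_contraction {d : ℕ} (M τ lam : ℝ)
    (hM : 0 < M) (hτ : 0 < τ) (hτM : τ ^ 2 * M ^ 2 < 1)
    (hlam0 : 0 < lam) (hlam : lam < Real.sqrt (1 - τ ^ 2 * M ^ 2))
    (H : Type*) [NormedAddCommGroup H] [NormedSpace ℝ H]
    (otimes : H →L[ℝ] H →L[ℝ] H) (hmult : ∀ x y : H, ‖otimes x y‖ = ‖x‖ * ‖y‖)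
    (one : H) (tilde : EuclideanSpace ℝ (Fin d) → H)
    (htilde : ∀ v : EuclideanSpace ℝ (Fin d), ‖v‖ ≤ M →
      ‖tilde v‖ ^ 2 = 1 / (1 - τ ^ 2 * ‖v‖ ^ 2)) :
    (∀ (x y : H) (z : EuclideanSpace ℝ (Fin d)), ‖z‖ ≤ M →
      ‖(lam • otimes x (tilde z) + one) - (lam • otimes y (tilde z) + one)‖ ≤
        (lam / Real.sqrt (1 - τ ^ 2 * M ^ 2)) * ‖x - y‖) ∧
      lam / Real.sqrt (1 - τ ^ 2 * M ^ 2) < 1 :=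
  volterra_reservoir_contraction_general M τ lam hlam0 hlam H otimes hmult one tilde htilde
end

section
/- Let M > 0, τ > 0 with τ²M² < 1, and 0 < λ < √(1 − τ²M²). The Volterra reservoir kernel K(z, z') = ⟨H(z), H(z')⟩, where H(z) is the time-0 state of the Volterra reservoir with input z, satisfies the functional recursion K(z, z') = 1 + λ² K(T₁z, T₁z') / (1 − τ² ⟨z_0, z'_0⟩) for all z, z' in K_M, where T₁ is the time-shift (T₁z)_t = z_{t−1}. -/
open scoped RealInnerProductSpace

theorem real_inner_add_smul_add_smul_of_orthogonal {H : Type*} [NormedAddCommGroup H]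
    [InnerProductSpace ℝ H] {e x y : H} (he : ⟪e, e⟫ = 1) (hx : ⟪e, x⟫ = 0)
    (hy : ⟪e, y⟫ = 0) (a b : ℝ) :
    ⟪e + a • x, e + b • y⟫ = 1 + a * b * ⟪x, y⟫ := by
  have hx' : ⟪x, e⟫ = 0 := by rw [real_inner_comm, hx]
  simp only [inner_add_left, inner_add_right, real_inner_smul_left, real_inner_smul_right,
    he, hx', hy]
  ring

theorem volterra_kernel_recursion_general {d : ℕ} (M τ lam : ℝ)
    (H : Type*) [NormedAddCommGroup H] [InnerProductSpace ℝ H]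
    (otimes : H →L[ℝ] H →L[ℝ] H)
    (hprod : ∀ a b u v : H, ⟪otimes a u, otimes b v⟫ = ⟪a, b⟫ * ⟪u, v⟫)
    (one : H) (hone : ⟪one, one⟫ = (1 : ℝ))
    (hcross : ∀ a u : H, ⟪one, otimes a u⟫ = (0 : ℝ))
    (tilde : EuclideanSpace ℝ (Fin d) → H)
    (htilde : ∀ u v : EuclideanSpace ℝ (Fin d), ‖u‖ ≤ M → ‖v‖ ≤ M →
      ⟪tilde u, tilde v⟫ = 1 / (1 - τ ^ 2 * ⟪u, v⟫))
    (Hst : (ℕ → EuclideanSpace ℝ (Fin d)) → H)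
    (hHst : ∀ z : ℕ → EuclideanSpace ℝ (Fin d), (∀ n, ‖z n‖ ≤ M) →
      Hst z = one + lam • otimes (Hst (fun n => z (n + 1))) (tilde (z 0))) :
    ∀ z z' : ℕ → EuclideanSpace ℝ (Fin d),
      (∀ n, ‖z n‖ ≤ M) → (∀ n, ‖z' n‖ ≤ M) →
      ⟪Hst z, Hst z'⟫ =
        1 + lam ^ 2 * ⟪Hst (fun n => z (n + 1)), Hst (fun n => z' (n + 1))⟫ /
          (1 - τ ^ 2 * ⟪z 0, z' 0⟫) := by
  intro z z' hz hz'
  rw [hHst z hz, hHst z' hz',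
    real_inner_add_smul_add_smul_of_orthogonal hone (hcross _ _) (hcross _ _),
    hprod, htilde _ _ (hz 0) (hz' 0)]
  ring

/-- The reservoir kernel `K(z,z') = ⟨H(z), H(z')⟩` of the Volterra reservoir,
where `H(z)` is the time-0 state, satisfies the recursion
`K(z,z') = 1 + λ² K(T₁z, T₁z')/(1 - τ²⟨z₀, z'₀⟩)` on `K_M`.  Sequences are indexed by
depth (`n` is time `-n`), so the time shift `T₁` (with `(T₁z)_t = z_{t-1}`) is
`n ↦ z (n+1)`.  The state space `T₂(ℝ^d)` is abstracted as a real inner product space `H`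
with a continuous bilinear product `otimes` such that `⟨a ⊗ u, b ⊗ v⟩ = ⟨a,b⟩⟨u,v⟩`, a
unit `one` of norm one orthogonal to all products, and the τ-tensorization `tilde` with
`⟨z̃, z̃'⟩ = 1/(1 - τ²⟨z,z'⟩)`.  `H(z)` is abstracted as any functional `Hst` satisfying
the Volterra reservoir fixed-point equation `H(z) = 1 + λ H(T₁z) ⊗ z̃₀` on `K_M`. -/
theorem volterra_kernel_recursion {d : ℕ} (M τ lam : ℝ)
    (hM : 0 < M) (hτ : 0 < τ) (hτM : τ ^ 2 * M ^ 2 < 1)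
    (hlam0 : 0 < lam) (hlam : lam < Real.sqrt (1 - τ ^ 2 * M ^ 2))
    (H : Type*) [NormedAddCommGroup H] [InnerProductSpace ℝ H]
    (otimes : H →L[ℝ] H →L[ℝ] H)
    (hprod : ∀ a b u v : H, ⟪otimes a u, otimes b v⟫ = ⟪a, b⟫ * ⟪u, v⟫)
    (one : H) (hone : ⟪one, one⟫ = (1 : ℝ))
    (hcross : ∀ a u : H, ⟪one, otimes a u⟫ = (0 : ℝ))
    (tilde : EuclideanSpace ℝ (Fin d) → H)
    (htilde : ∀ u v : EuclideanSpace ℝ (Fin d), ‖u‖ ≤ M → ‖v‖ ≤ M →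
      ⟪tilde u, tilde v⟫ = 1 / (1 - τ ^ 2 * ⟪u, v⟫))
    (Hst : (ℕ → EuclideanSpace ℝ (Fin d)) → H)
    (hHst : ∀ z : ℕ → EuclideanSpace ℝ (Fin d), (∀ n, ‖z n‖ ≤ M) →
      Hst z = one + lam • otimes (Hst (fun n => z (n + 1))) (tilde (z 0))) :
    ∀ z z' : ℕ → EuclideanSpace ℝ (Fin d),
      (∀ n, ‖z n‖ ≤ M) → (∀ n, ‖z' n‖ ≤ M) →
      ⟪Hst z, Hst z'⟫ =
        1 + lam ^ 2 * ⟪Hst (fun n => z (n + 1)), Hst (fun n => z' (n + 1))⟫ /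
          (1 - τ ^ 2 * ⟪z 0, z' 0⟫) :=
  volterra_kernel_recursion_general M τ lam H otimes hprod one hone hcross tilde htilde Hst hHst
end

section
/- Under the conditions M > 0, τ²M² < 1, 0 < λ < √(1 − τ²M²), the unique bounded solution of the kernel recursion K(z, z') = 1 + λ² K(T₁z, T₁z')/(1 − τ²⟨z_0, z'_0⟩) on K_M × K_M is given by the absolutely convergent series K(z, z') = 1 + Σ_{k=1}^∞ λ^{2k} ∏_{j=0}^{k−1} 1/(1 − τ²⟨z_{−j}, z'_{−j}⟩). -/
open scoped RealInnerProductSpace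

/-- The Volterra reservoir kernel in closed form:
`K(z,z') = 1 + Σ_{k≥1} λ^{2k} Π_{j=0}^{k-1} (1 - τ²⟨z_{-j}, z'_{-j}⟩)⁻¹`.
Sequences are indexed by depth: index `j` stands for time `-j`. -/
noncomputable def volterraKernel {d : ℕ} (lam τ : ℝ)
    (z z' : ℕ → EuclideanSpace ℝ (Fin d)) : ℝ :=
  1 + ∑' k : ℕ, lam ^ (2 * k + 2) *
    ∏ j ∈ Finset.range (k + 1), (1 - τ ^ 2 * ⟪z j, z' j⟫)⁻¹

/-!
Write `w_j = λ² / (1 - τ²⟨z_j, z'_j⟩)`. On `K_M × K_M` every `w_j` lies in `[0, r]` with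
`r = λ² / (1 - τ²M²) < 1`, so the kernel is the series `Σ_k Π_{j<k} w_j`, dominated by `Σ_k rᵏ`:
it is bounded by `(1 - r)⁻¹` and satisfies `K = 1 + w₀ · K ∘ T₁` by splitting off `k = 0`.
The difference `f` of two bounded solutions satisfies `f = w₀ · f ∘ T₁`, hence `|f| ≤ C rⁿ` for
every `n`, so `f = 0`.
-/

open Finset Filter Topology Set

section ProdSeries

variable {𝕜 : Type*} [NormedField 𝕜] {w : ℕ → 𝕜} {r : ℝ}

theorem norm_prod_range_le_pow (hw : ∀ j, ‖w j‖ ≤ r) (k : ℕ) :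
    ‖∏ j ∈ range k, w j‖ ≤ r ^ k := by
  rw [norm_prod]
  exact (prod_le_prod (fun j _ => norm_nonneg (w j)) fun j _ => hw j).trans_eq (by simp)

theorem summable_norm_prod_range (hw : ∀ j, ‖w j‖ ≤ r) (hr : r < 1) :
    Summable fun k => ‖∏ j ∈ range k, w j‖ :=
  (summable_geometric_of_lt_one ((norm_nonneg _).trans (hw 0)) hr).of_nonneg_of_le
    (fun _ => norm_nonneg _) (norm_prod_range_le_pow hw)

theorem norm_tsum_prod_range_le (hw : ∀ j, ‖w j‖ ≤ r) (hr : r < 1) :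
    ‖∑' k, ∏ j ∈ range k, w j‖ ≤ (1 - r)⁻¹ :=
  tsum_of_norm_bounded (hasSum_geometric_of_lt_one ((norm_nonneg _).trans (hw 0)) hr)
    (norm_prod_range_le_pow hw)

theorem tsum_prod_range_eq_one_add_mul (hs : Summable fun k => ∏ j ∈ range k, w j) :
    ∑' k, ∏ j ∈ range k, w j = 1 + w 0 * ∑' k, ∏ j ∈ range k, w (j + 1) := by
  rw [hs.tsum_eq_zero_add, ← tsum_mul_left]
  simp only [prod_range_zero, prod_range_succ', mul_comm]

end ProdSeries

theorem eqOn_zero_of_norm_le_of_eq_mul_comp {X 𝕜 : Type*} [NormedField 𝕜] {S : Set X}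
    {T : X → X} (hT : MapsTo T S S) {a f : X → 𝕜} {r C : ℝ} (hr : r < 1)
    (ha : ∀ x ∈ S, ‖a x‖ ≤ r) (hfC : ∀ x ∈ S, ‖f x‖ ≤ C)
    (hf : ∀ x ∈ S, f x = a x * f (T x)) : EqOn f 0 S := by
  intro x hx
  have hr0 : 0 ≤ r := (norm_nonneg _).trans (ha x hx)
  have hpow : ∀ n : ℕ, ∀ y ∈ S, ‖f y‖ ≤ C * r ^ n := by
    intro n
    induction n with
    | zero => simpa using hfC
    | succ n ih =>
      intro y hy
      calc ‖f y‖ = ‖a y‖ * ‖f (T y)‖ := by rw [hf y hy, norm_mul]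
        _ ≤ r * (C * r ^ n) := mul_le_mul (ha y hy) (ih _ (hT hy)) (norm_nonneg _) hr0
        _ = C * r ^ (n + 1) := by ring
  have hlim : Tendsto (fun n => C * r ^ n) atTop (𝓝 0) := by
    simpa using (tendsto_pow_atTop_nhds_zero_of_lt_one hr0 hr).const_mul C
  exact norm_le_zero_iff.mp (ge_of_tendsto' hlim fun n => hpow n x hx)

theorem div_lt_one_of_nonneg_of_lt {a b : ℝ} (ha : 0 ≤ a) (h : a < b) : a / b < 1 :=
  (div_lt_one (ha.trans_lt h)).mpr h

theorem real_inner_le_sq_of_norm_le {F : Type*} [NormedAddCommGroup F] [InnerProductSpace ℝ F]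
    {x y : F} {M : ℝ} (hx : ‖x‖ ≤ M) (hy : ‖y‖ ≤ M) : ⟪x, y⟫ ≤ M ^ 2 :=
  (real_inner_le_norm x y).trans <| by
    rw [sq]; exact mul_le_mul hx hy (norm_nonneg _) ((norm_nonneg _).trans hx)

section Volterra

variable {d : ℕ} {M τ lam : ℝ} {z z' : ℕ → EuclideanSpace ℝ (Fin d)}

noncomputable def volterraWeight (lam τ : ℝ) (z z' : ℕ → EuclideanSpace ℝ (Fin d)) (j : ℕ) : ℝ :=
  lam ^ 2 / (1 - τ ^ 2 * ⟪z j, z' j⟫)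

theorem volterraWeight_zero_mul (x : ℝ) :
    volterraWeight lam τ z z' 0 * x = lam ^ 2 * x / (1 - τ ^ 2 * ⟪z 0, z' 0⟫) :=
  div_mul_eq_mul_div _ _ _

theorem pow_mul_prod_inv_eq_prod_volterraWeight (k : ℕ) :
    lam ^ (2 * k + 2) * ∏ j ∈ range (k + 1), (1 - τ ^ 2 * ⟪z j, z' j⟫)⁻¹ =
      ∏ j ∈ range (k + 1), volterraWeight lam τ z z' j := by
  simp only [volterraWeight, div_eq_mul_inv, prod_mul_distrib, prod_const, card_range, ← pow_mul,
    mul_add_one]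

theorem volterraKernel_eq_tsum_prod
    (hs : Summable fun k => ∏ j ∈ range k, volterraWeight lam τ z z' j) :
    volterraKernel lam τ z z' = ∑' k, ∏ j ∈ range k, volterraWeight lam τ z z' j := by
  rw [hs.tsum_eq_zero_add]
  simp only [volterraKernel, pow_mul_prod_inv_eq_prod_volterraWeight, prod_range_zero]

theorem norm_volterraWeight_le (hlam : lam ^ 2 < 1 - τ ^ 2 * M ^ 2) (hz : ∀ n, ‖z n‖ ≤ M)
    (hz' : ∀ n, ‖z' n‖ ≤ M) (j : ℕ) :
    ‖volterraWeight lam τ z z' j‖ ≤ lam ^ 2 / (1 - τ ^ 2 * M ^ 2) := by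
  have hM : 0 < 1 - τ ^ 2 * M ^ 2 := (sq_nonneg lam).trans_lt hlam
  have hle : 1 - τ ^ 2 * M ^ 2 ≤ 1 - τ ^ 2 * ⟪z j, z' j⟫ :=
    sub_le_sub_left (mul_le_mul_of_nonneg_left
      (real_inner_le_sq_of_norm_le (hz j) (hz' j)) (sq_nonneg τ)) 1
  rw [volterraWeight, norm_div, norm_pow, Real.norm_eq_abs, sq_abs, Real.norm_eq_abs,
    abs_of_pos (hM.trans_le hle)]
  exact div_le_div_of_nonneg_left (sq_nonneg lam) hM hle

theorem summable_norm_prod_volterraWeight (hlam : lam ^ 2 < 1 - τ ^ 2 * M ^ 2)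
    (hz : ∀ n, ‖z n‖ ≤ M) (hz' : ∀ n, ‖z' n‖ ≤ M) :
    Summable fun k => ‖∏ j ∈ range k, volterraWeight lam τ z z' j‖ :=
  summable_norm_prod_range (norm_volterraWeight_le hlam hz hz')
    (div_lt_one_of_nonneg_of_lt (sq_nonneg lam) hlam)

theorem volterraKernel_eq_tsum (hlam : lam ^ 2 < 1 - τ ^ 2 * M ^ 2) (hz : ∀ n, ‖z n‖ ≤ M)
    (hz' : ∀ n, ‖z' n‖ ≤ M) :
    volterraKernel lam τ z z' = ∑' k, ∏ j ∈ range k, volterraWeight lam τ z z' j :=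
  volterraKernel_eq_tsum_prod (summable_norm_prod_volterraWeight hlam hz hz').of_norm

theorem summable_abs_volterraKernel_term (hlam : lam ^ 2 < 1 - τ ^ 2 * M ^ 2)
    (hz : ∀ n, ‖z n‖ ≤ M) (hz' : ∀ n, ‖z' n‖ ≤ M) :
    Summable fun k : ℕ => |lam ^ (2 * k + 2) *
      ∏ j ∈ range (k + 1), (1 - τ ^ 2 * ⟪z j, z' j⟫)⁻¹| := by
  simp only [pow_mul_prod_inv_eq_prod_volterraWeight, ← Real.norm_eq_abs]
  exact (summable_nat_add_iff (f := fun k => ‖∏ j ∈ range k, volterraWeight lam τ z z' j‖) 1).mpr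
    (summable_norm_prod_volterraWeight hlam hz hz')

theorem volterraKernel_eq_one_add_mul_shift (hlam : lam ^ 2 < 1 - τ ^ 2 * M ^ 2)
    (hz : ∀ n, ‖z n‖ ≤ M) (hz' : ∀ n, ‖z' n‖ ≤ M) :
    volterraKernel lam τ z z' = 1 + volterraWeight lam τ z z' 0 *
      volterraKernel lam τ (fun n => z (n + 1)) (fun n => z' (n + 1)) := by
  rw [volterraKernel_eq_tsum hlam hz hz',
    volterraKernel_eq_tsum hlam (fun n => hz (n + 1)) (fun n => hz' (n + 1)),
    tsum_prod_range_eq_one_add_mul (summable_norm_prod_volterraWeight hlam hz hz').of_norm]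
  rfl

theorem abs_volterraKernel_le (hlam : lam ^ 2 < 1 - τ ^ 2 * M ^ 2) (hz : ∀ n, ‖z n‖ ≤ M)
    (hz' : ∀ n, ‖z' n‖ ≤ M) :
    |volterraKernel lam τ z z'| ≤ (1 - lam ^ 2 / (1 - τ ^ 2 * M ^ 2))⁻¹ := by
  rw [volterraKernel_eq_tsum hlam hz hz', ← Real.norm_eq_abs]
  exact norm_tsum_prod_range_le (norm_volterraWeight_le hlam hz hz')
    (div_lt_one_of_nonneg_of_lt (sq_nonneg lam) hlam)

theorem eq_volterraKernel_of_bounded_of_eq_one_add_mul_shift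
    (hlam : lam ^ 2 < 1 - τ ^ 2 * M ^ 2)
    (K : (ℕ → EuclideanSpace ℝ (Fin d)) → (ℕ → EuclideanSpace ℝ (Fin d)) → ℝ) {C : ℝ}
    (hKC : ∀ z z', (∀ n, ‖z n‖ ≤ M) → (∀ n, ‖z' n‖ ≤ M) → |K z z'| ≤ C)
    (hK : ∀ z z', (∀ n, ‖z n‖ ≤ M) → (∀ n, ‖z' n‖ ≤ M) →
      K z z' = 1 + volterraWeight lam τ z z' 0 * K (fun n => z (n + 1)) (fun n => z' (n + 1)))
    (hz : ∀ n, ‖z n‖ ≤ M) (hz' : ∀ n, ‖z' n‖ ≤ M) :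
    K z z' = volterraKernel lam τ z z' := by
  let S := {p : (ℕ → EuclideanSpace ℝ (Fin d)) × (ℕ → EuclideanSpace ℝ (Fin d)) |
    (∀ n, ‖p.1 n‖ ≤ M) ∧ ∀ n, ‖p.2 n‖ ≤ M}
  have hshift : MapsTo (Prod.map (fun z n => z (n + 1)) (fun z n => z (n + 1))) S S :=
    fun p hp => ⟨fun n => hp.1 (n + 1), fun n => hp.2 (n + 1)⟩
  have hdiff := eqOn_zero_of_norm_le_of_eq_mul_comp hshift
    (f := fun p => K p.1 p.2 - volterraKernel lam τ p.1 p.2)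
    (div_lt_one_of_nonneg_of_lt (sq_nonneg lam) hlam)
    (fun p hp => norm_volterraWeight_le hlam hp.1 hp.2 0)
    (fun p hp => (abs_sub _ _).trans
      (add_le_add (hKC _ _ hp.1 hp.2) (abs_volterraKernel_le hlam hp.1 hp.2)))
    (fun p hp => by
      simp only [Prod.map_fst, Prod.map_snd]
      rw [hK _ _ hp.1 hp.2, volterraKernel_eq_one_add_mul_shift hlam hp.1 hp.2]
      ring)
  exact sub_eq_zero.mp (hdiff (show (z, z') ∈ S from ⟨hz, hz'⟩))

end Volterra

theorem volterra_kernel_unique_bounded_solution_general {d : ℕ} (M τ lam : ℝ)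
    (hlam0 : 0 < lam) (hlam : lam < Real.sqrt (1 - τ ^ 2 * M ^ 2)) :
    (∀ z z' : ℕ → EuclideanSpace ℝ (Fin d), (∀ n, ‖z n‖ ≤ M) → (∀ n, ‖z' n‖ ≤ M) →
      Summable (fun k : ℕ => |lam ^ (2 * k + 2) *
        ∏ j ∈ Finset.range (k + 1), (1 - τ ^ 2 * ⟪z j, z' j⟫)⁻¹|)) ∧
    (∀ z z' : ℕ → EuclideanSpace ℝ (Fin d), (∀ n, ‖z n‖ ≤ M) → (∀ n, ‖z' n‖ ≤ M) →
      volterraKernel lam τ z z' =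
        1 + lam ^ 2 * volterraKernel lam τ (fun n => z (n + 1)) (fun n => z' (n + 1)) /
          (1 - τ ^ 2 * ⟪z 0, z' 0⟫)) ∧
    (∃ C : ℝ, ∀ z z' : ℕ → EuclideanSpace ℝ (Fin d),
      (∀ n, ‖z n‖ ≤ M) → (∀ n, ‖z' n‖ ≤ M) → |volterraKernel lam τ z z'| ≤ C) ∧
    (∀ K' : (ℕ → EuclideanSpace ℝ (Fin d)) → (ℕ → EuclideanSpace ℝ (Fin d)) → ℝ,
      (∃ C : ℝ, ∀ z z', (∀ n, ‖z n‖ ≤ M) → (∀ n, ‖z' n‖ ≤ M) → |K' z z'| ≤ C) →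
      (∀ z z', (∀ n, ‖z n‖ ≤ M) → (∀ n, ‖z' n‖ ≤ M) →
        K' z z' = 1 + lam ^ 2 * K' (fun n => z (n + 1)) (fun n => z' (n + 1)) /
          (1 - τ ^ 2 * ⟪z 0, z' 0⟫)) →
      ∀ z z', (∀ n, ‖z n‖ ≤ M) → (∀ n, ‖z' n‖ ≤ M) →
        K' z z' = volterraKernel lam τ z z') := by
  have hsq : lam ^ 2 < 1 - τ ^ 2 * M ^ 2 := (Real.lt_sqrt hlam0.le).mp hlam
  refine ⟨fun z z' hz hz' => summable_abs_volterraKernel_term hsq hz hz',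
    fun z z' hz hz' => ?_, ⟨_, fun z z' hz hz' => abs_volterraKernel_le hsq hz hz'⟩,
    fun K ⟨C, hKC⟩ hK _ _ => eq_volterraKernel_of_bounded_of_eq_one_add_mul_shift hsq K hKC
      fun y y' hy hy' => ?_⟩
  · rw [volterraKernel_eq_one_add_mul_shift hsq hz hz', volterraWeight_zero_mul]
  · rw [hK y y' hy hy', volterraWeight_zero_mul]

/-- Under `M > 0`, `τ²M² < 1`, `0 < λ < √(1-τ²M²)`, the series defining the
Volterra kernel converges absolutely on `K_M × K_M`, the kernel satisfies the recursion
`K(z,z') = 1 + λ² K(T₁z,T₁z')/(1 - τ²⟨z₀, z'₀⟩)`, it is bounded, and it is the unique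
bounded solution of that recursion on `K_M × K_M`. -/
theorem volterra_kernel_unique_bounded_solution {d : ℕ} (M τ lam : ℝ)
    (hM : 0 < M) (hτ : 0 < τ) (hτM : τ ^ 2 * M ^ 2 < 1)
    (hlam0 : 0 < lam) (hlam : lam < Real.sqrt (1 - τ ^ 2 * M ^ 2)) :
    (∀ z z' : ℕ → EuclideanSpace ℝ (Fin d), (∀ n, ‖z n‖ ≤ M) → (∀ n, ‖z' n‖ ≤ M) →
      Summable (fun k : ℕ => |lam ^ (2 * k + 2) *
        ∏ j ∈ Finset.range (k + 1), (1 - τ ^ 2 * ⟪z j, z' j⟫)⁻¹|)) ∧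
    (∀ z z' : ℕ → EuclideanSpace ℝ (Fin d), (∀ n, ‖z n‖ ≤ M) → (∀ n, ‖z' n‖ ≤ M) →
      volterraKernel lam τ z z' =
        1 + lam ^ 2 * volterraKernel lam τ (fun n => z (n + 1)) (fun n => z' (n + 1)) /
          (1 - τ ^ 2 * ⟪z 0, z' 0⟫)) ∧
    (∃ C : ℝ, ∀ z z' : ℕ → EuclideanSpace ℝ (Fin d),
      (∀ n, ‖z n‖ ≤ M) → (∀ n, ‖z' n‖ ≤ M) → |volterraKernel lam τ z z'| ≤ C) ∧
    (∀ K' : (ℕ → EuclideanSpace ℝ (Fin d)) → (ℕ → EuclideanSpace ℝ (Fin d)) → ℝ,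
      (∃ C : ℝ, ∀ z z', (∀ n, ‖z n‖ ≤ M) → (∀ n, ‖z' n‖ ≤ M) → |K' z z'| ≤ C) →
      (∀ z z', (∀ n, ‖z n‖ ≤ M) → (∀ n, ‖z' n‖ ≤ M) →
        K' z z' = 1 + lam ^ 2 * K' (fun n => z (n + 1)) (fun n => z' (n + 1)) /
          (1 - τ ^ 2 * ⟪z 0, z' 0⟫)) →
      ∀ z z', (∀ n, ‖z n‖ ≤ M) → (∀ n, ‖z' n‖ ≤ M) →
        K' z z' = volterraKernel lam τ z z') :=
  volterra_kernel_unique_bounded_solution_general M τ lam hlam0 hlam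
end

section
/- Let M > 0, τ²M² < 1, 0 < λ < √(1 − τ²M²). The Volterra kernel K(z, z') = 1 + Σ_{k=1}^∞ λ^{2k} ∏_{j=0}^{k−1} (1 − τ²⟨z_{−j}, z'_{−j}⟩)^{−1} is a symmetric positive semidefinite kernel on K_M: for any n ∈ N, a_1, …, a_n ∈ R and z^1, …, z^n ∈ K_M, Σ_{i,j} a_i a_j K(z^i, z^j) ≥ 0. -/
/-! Each factor `(1 - τ²⟪x, y⟫)⁻¹` is the geometric series `∑ₘ (τ²⟪x, y⟫)ᵐ`, whose terms are
Hadamard powers of a Gram matrix and hence positive semidefinite by Schur's product theorem.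
Finite Hadamard products, nonnegative multiples and entrywise convergent sums of positive
semidefinite matrices stay positive semidefinite (the cone is closed), and `λ² < 1 - τ²M²` makes
the series over `k` dominated by a convergent geometric series. -/

open scoped RealInnerProductSpace

open Matrix
open scoped ComplexOrder

namespace Matrix

variable {ι 𝕜 : Type*} [Fintype ι] [RCLike 𝕜]

theorem isClosed_setOf_posSemidef : IsClosed {A : Matrix ι ι 𝕜 | A.PosSemidef} := by
  simp only [posSemidef_iff_dotProduct_mulVec, Set.ofPred_and, Set.ofPred_forall]
  refine .inter (isClosed_eq (by fun_prop) continuous_id) (isClosed_iInter fun x => ?_)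
  exact isClosed_le continuous_const (by fun_prop)

theorem posSemidef_of_tsum {β : Type*} {F : β → Matrix ι ι 𝕜}
    (hF : ∀ b, (F b).PosSemidef) (hs : ∀ i j, Summable fun b => F b i j) :
    (of fun i j => ∑' b, F b i j).PosSemidef := by
  have hsum : HasSum F (of fun i j => ∑' b, F b i j) :=
    Pi.hasSum.mpr fun i => Pi.hasSum.mpr fun j => (hs i j).hasSum
  exact isClosed_setOf_posSemidef.mem_of_tendsto hsum
    (.of_forall fun s => posSemidef_sum s fun b _ => hF b)

theorem posSemidef_allOnes : (of fun _ _ : ι => (1 : 𝕜)).PosSemidef := by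
  convert posSemidef_gram 𝕜 fun _ : ι => (1 : 𝕜) using 1
  ext
  simp

theorem posSemidef_of_prod {β : Type*} (s : Finset β) {F : β → Matrix ι ι 𝕜}
    (hF : ∀ b ∈ s, (F b).PosSemidef) : (of fun i j => ∏ b ∈ s, F b i j).PosSemidef := by
  classical
  induction s using Finset.induction_on with
  | empty => simpa using posSemidef_allOnes
  | insert b s hb ih =>
    simp only [Finset.prod_insert hb]
    exact (hF b (s.mem_insert_self b)).hadamard (ih fun c hc => hF c (s.mem_insert_of_mem hc))

theorem PosSemidef.sum_mul_mul_nonneg {A : Matrix ι ι ℝ} (hA : A.PosSemidef) (a : ι → ℝ) :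
    0 ≤ ∑ i, ∑ j, a i * a j * A i j := by
  simpa [dotProduct, mulVec, Finset.mul_sum, mul_comm, mul_left_comm] using
    hA.dotProduct_mulVec_nonneg a

end Matrix

section InnerProductSpace

variable {E : Type*} [NormedAddCommGroup E] [InnerProductSpace ℝ E]

theorem abs_sq_mul_inner_le {x y : E} {M : ℝ} (τ : ℝ) (hx : ‖x‖ ≤ M) (hy : ‖y‖ ≤ M) :
    |τ ^ 2 * ⟪x, y⟫| ≤ τ ^ 2 * M ^ 2 := by
  rw [abs_mul, abs_of_nonneg (sq_nonneg τ), sq M]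
  gcongr
  exact (abs_real_inner_le_norm x y).trans
    (mul_le_mul hx hy (norm_nonneg _) ((norm_nonneg _).trans hx))

theorem posSemidef_inv_one_sub_sq_mul_inner {ι : Type*} [Fintype ι] {zs : ι → E} {M τ : ℝ}
    (hτM : τ ^ 2 * M ^ 2 < 1) (hzs : ∀ i, ‖zs i‖ ≤ M) :
    (of fun i j => (1 - τ ^ 2 * ⟪zs i, zs j⟫)⁻¹).PosSemidef := by
  have habs i j : |τ ^ 2 * ⟪zs i, zs j⟫| < 1 :=
    (abs_sq_mul_inner_le τ (hzs i) (hzs j)).trans_lt hτM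
  have hgeom : (of fun i j => (1 - τ ^ 2 * ⟪zs i, zs j⟫)⁻¹) =
      of fun i j => ∑' m, ∏ _ ∈ Finset.range m, (τ ^ 2 • gram ℝ zs) i j := by
    ext i j
    simp [tsum_geometric_of_abs_lt_one (habs i j)]
  rw [hgeom]
  refine posSemidef_of_tsum
    (F := fun m => of fun i j => ∏ _ ∈ Finset.range m, (τ ^ 2 • gram ℝ zs) i j)
    (fun m => posSemidef_of_prod _ fun _ _ => (posSemidef_gram ℝ zs).smul (sq_nonneg τ))
    fun i j => ?_
  simpa using summable_geometric_of_abs_lt_one (habs i j)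

theorem summable_volterra_terms {z z' : ℕ → E} {M τ lam : ℝ}
    (hlam : lam ^ 2 < 1 - τ ^ 2 * M ^ 2) (hz : ∀ l, ‖z l‖ ≤ M) (hz' : ∀ l, ‖z' l‖ ≤ M) :
    Summable fun k =>
      lam ^ (2 * k + 2) * ∏ l ∈ Finset.range (k + 1), (1 - τ ^ 2 * ⟪z l, z' l⟫)⁻¹ := by
  set c := 1 - τ ^ 2 * M ^ 2
  have hc : 0 < c := by linarith [sq_nonneg lam]
  have hfac l : c ≤ 1 - τ ^ 2 * ⟪z l, z' l⟫ := by
    linarith [le_abs_self (τ ^ 2 * ⟪z l, z' l⟫), abs_sq_mul_inner_le τ (hz l) (hz' l)]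
  have hinv l : 0 ≤ (1 - τ ^ 2 * ⟪z l, z' l⟫)⁻¹ := inv_nonneg.mpr (hc.trans_le (hfac l)).le
  have hpow k : lam ^ (2 * k + 2) = (lam ^ 2) ^ (k + 1) := by ring
  have hr : lam ^ 2 / c < 1 := (div_lt_one hc).mpr hlam
  refine Summable.of_nonneg_of_le (fun k => ?_) (fun k => ?_)
    ((summable_nat_add_iff 1).mpr (summable_geometric_of_lt_one (by positivity) hr))
  · rw [hpow]
    exact mul_nonneg (by positivity) (Finset.prod_nonneg fun l _ => hinv l)
  · calc lam ^ (2 * k + 2) * ∏ l ∈ Finset.range (k + 1), (1 - τ ^ 2 * ⟪z l, z' l⟫)⁻¹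
        ≤ (lam ^ 2) ^ (k + 1) * ∏ _l ∈ Finset.range (k + 1), c⁻¹ := by
          rw [hpow]
          gcongr with l
          exacts [fun l _ => hinv l, hfac l]
      _ = (lam ^ 2 / c) ^ (k + 1) := by
          rw [Finset.prod_const, Finset.card_range, div_pow, div_eq_mul_inv, inv_pow]

end InnerProductSpace

theorem volterraKernel_comm {d : ℕ} (lam τ : ℝ) (z z' : ℕ → EuclideanSpace ℝ (Fin d)) :
    volterraKernel lam τ z z' = volterraKernel lam τ z' z := by
  simp only [volterraKernel, real_inner_comm]

theorem posSemidef_volterraKernel {d : ℕ} {ι : Type*} [Fintype ι] {M τ lam : ℝ}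
    (hlam : lam ^ 2 < 1 - τ ^ 2 * M ^ 2) {zs : ι → ℕ → EuclideanSpace ℝ (Fin d)}
    (hzs : ∀ i k, ‖zs i k‖ ≤ M) :
    (of fun i j => volterraKernel lam τ (zs i) (zs j)).PosSemidef := by
  have hτM : τ ^ 2 * M ^ 2 < 1 := by linarith [sq_nonneg lam]
  have hterm k : (lam ^ (2 * k + 2) • of fun i j =>
      ∏ l ∈ Finset.range (k + 1), (1 - τ ^ 2 * ⟪zs i l, zs j l⟫)⁻¹).PosSemidef :=
    (posSemidef_of_prod _ fun l _ => posSemidef_inv_one_sub_sq_mul_inner hτM fun i => hzs i l).smul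
      (Even.pow_nonneg ⟨k + 1, by ring⟩ lam)
  exact posSemidef_allOnes.add (posSemidef_of_tsum hterm fun i j =>
    summable_volterra_terms hlam (hzs i) (hzs j))

theorem volterra_kernel_pos_semidef_general {d : ℕ} (M τ lam : ℝ)
    (hlam0 : 0 < lam) (hlam : lam < Real.sqrt (1 - τ ^ 2 * M ^ 2)) :
    (∀ z z' : ℕ → EuclideanSpace ℝ (Fin d), (∀ n, ‖z n‖ ≤ M) → (∀ n, ‖z' n‖ ≤ M) →
      volterraKernel lam τ z z' = volterraKernel lam τ z' z) ∧
    (∀ (n : ℕ) (a : Fin n → ℝ) (zs : Fin n → (ℕ → EuclideanSpace ℝ (Fin d))),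
      (∀ i k, ‖zs i k‖ ≤ M) →
      0 ≤ ∑ i, ∑ j, a i * a j * volterraKernel lam τ (zs i) (zs j)) := by
  have hlam_sq : lam ^ 2 < 1 - τ ^ 2 * M ^ 2 := (Real.lt_sqrt hlam0.le).mp hlam
  exact ⟨fun z z' _ _ => volterraKernel_comm lam τ z z',
    fun _ a _ hzs => (posSemidef_volterraKernel hlam_sq hzs).sum_mul_mul_nonneg a⟩

/-- Under `M > 0`, `τ²M² < 1`, `0 < λ < √(1-τ²M²)`, the Volterra kernel is a
symmetric positive semidefinite kernel on `K_M`: for all `a_1,…,a_n ∈ ℝ` and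
`z^1,…,z^n ∈ K_M`, `Σ_{i,j} a_i a_j K(z^i, z^j) ≥ 0`. -/
theorem volterra_kernel_pos_semidef {d : ℕ} (M τ lam : ℝ)
    (hM : 0 < M) (hτ : 0 < τ) (hτM : τ ^ 2 * M ^ 2 < 1)
    (hlam0 : 0 < lam) (hlam : lam < Real.sqrt (1 - τ ^ 2 * M ^ 2)) :
    (∀ z z' : ℕ → EuclideanSpace ℝ (Fin d), (∀ n, ‖z n‖ ≤ M) → (∀ n, ‖z' n‖ ≤ M) →
      volterraKernel lam τ z z' = volterraKernel lam τ z' z) ∧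
    (∀ (n : ℕ) (a : Fin n → ℝ) (zs : Fin n → (ℕ → EuclideanSpace ℝ (Fin d))),
      (∀ i k, ‖zs i k‖ ≤ M) →
      0 ≤ ∑ i, ∑ j, a i * a j * volterraKernel lam τ (zs i) (zs j)) :=
  volterra_kernel_pos_semidef_general M τ lam hlam0 hlam
end

section
/- (Representer theorem in this setting.) Under the hypotheses of the previous statement, if the regularized empirical risk R attains its minimum over X, then it attains its minimum at a point of the form Ŵ = Σ_{i=0}^{n−1} α_i H(Z^{-n+1}_{-i}) for some α_0, …, α_{n−1} ∈ R; consequently the minimization reduces to minimizing over α ∈ R^n the expression (1/n) Σ_{i=1}^n L((Kα)_i, Y_{−(n−i)}) + Ω(α^⊤Kα), where K is the Gram matrix K_{ij} = ⟨H(Z^{-n+1}_{-(n−i)}), H(Z^{-n+1}_{-(n−j)})⟩. -/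
open scoped RealInnerProductSpace
open Matrix

/-- The regularized empirical risk
`R(W) = (1/n) Σᵢ L(⟨W, H(Z₋ᵢ)⟩, Yᵢ) + Ω(‖W‖²)`, where `v i = H(Z^{-n+1}_{-(n-i)})` are the
feature vectors of the truncated input samples and `Y i = Y_{-(n-i)}`. -/
noncomputable def regRisk {X : Type*} [NormedAddCommGroup X] [InnerProductSpace ℝ X]
    {n : ℕ} (v : Fin n → X) (Y : Fin n → ℝ) (L : ℝ → ℝ → ℝ) (Om : ℝ → ℝ) (W : X) : ℝ :=
  (1 / (n : ℝ)) * ∑ i, L ⟪W, v i⟫ (Y i) + Om (‖W‖ ^ 2)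

/-- The Gram matrix `K_{ij} = ⟨H(Z^{-n+1}_{-(n-i)}), H(Z^{-n+1}_{-(n-j)})⟩`. -/
noncomputable def gramMat {X : Type*} [NormedAddCommGroup X] [InnerProductSpace ℝ X]
    {n : ℕ} (v : Fin n → X) : Matrix (Fin n) (Fin n) ℝ :=
  Matrix.of fun i j => ⟪v i, v j⟫

/-!
Projecting a minimizer `W₀` orthogonally onto the span of the features `v i` leaves every
`⟪W₀, v i⟫` unchanged and does not increase `‖W₀‖`, so, `Ω` being monotone, the risk does not
increase either: the projection, a combination `Σᵢ αᵢ vᵢ`, is again a minimizer. On such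
combinations the inner products and the squared norm are `Kα` and `αᵀKα`.
-/

section RegRisk

variable {X : Type*} [NormedAddCommGroup X] [InnerProductSpace ℝ X] {n : ℕ}

theorem inner_sum_smul_eq_gramMat_mulVec (v : Fin n → X) (β : Fin n → ℝ) (i : Fin n) :
    ⟪∑ j, β j • v j, v i⟫ = (gramMat v *ᵥ β) i := by
  simp only [sum_inner, real_inner_smul_left, mulVec, dotProduct, gramMat, of_apply]
  exact Finset.sum_congr rfl fun j _ => by rw [real_inner_comm, mul_comm]

theorem norm_sum_smul_sq_eq_dotProduct_gramMat_mulVec (v : Fin n → X) (β : Fin n → ℝ) :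
    ‖∑ i, β i • v i‖ ^ 2 = β ⬝ᵥ gramMat v *ᵥ β := by
  rw [← real_inner_self_eq_norm_sq, inner_sum]
  simp only [real_inner_smul_right, inner_sum_smul_eq_gramMat_mulVec, dotProduct]

theorem regRisk_sum_smul (v : Fin n → X) (Y : Fin n → ℝ) (L : ℝ → ℝ → ℝ) (Om : ℝ → ℝ)
    (β : Fin n → ℝ) :
    regRisk v Y L Om (∑ i, β i • v i) =
      (1 / (n : ℝ)) * ∑ i, L ((gramMat v *ᵥ β) i) (Y i) + Om (β ⬝ᵥ gramMat v *ᵥ β) := by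
  simp only [regRisk, inner_sum_smul_eq_gramMat_mulVec,
    norm_sum_smul_sq_eq_dotProduct_gramMat_mulVec]

theorem regRisk_starProjection_le {v : Fin n → X} (Y : Fin n → ℝ) (L : ℝ → ℝ → ℝ) {Om : ℝ → ℝ}
    (hOm : MonotoneOn Om (Set.Ici 0)) (K : Submodule ℝ X) [K.HasOrthogonalProjection]
    (hv : ∀ i, v i ∈ K) (W : X) :
    regRisk v Y L Om (K.starProjection W) ≤ regRisk v Y L Om W := by
  have hinner (i : Fin n) : ⟪K.starProjection W, v i⟫ = ⟪W, v i⟫ := by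
    rw [K.inner_starProjection_left_eq_right, K.starProjection_eq_self_iff.2 (hv i)]
  have hnorm : ‖K.starProjection W‖ ^ 2 ≤ ‖W‖ ^ 2 := by
    gcongr
    exact K.norm_starProjection_apply_le W
  simp only [regRisk, hinner]
  gcongr
  exact hOm (Set.mem_Ici.2 (sq_nonneg _)) (Set.mem_Ici.2 (sq_nonneg _)) hnorm

theorem exists_regRisk_sum_smul_le (v : Fin n → X) (Y : Fin n → ℝ) (L : ℝ → ℝ → ℝ) {Om : ℝ → ℝ}
    (hOm : MonotoneOn Om (Set.Ici 0)) (W : X) :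
    ∃ α : Fin n → ℝ, regRisk v Y L Om (∑ i, α i • v i) ≤ regRisk v Y L Om W := by
  let K := Submodule.span ℝ (Set.range v)
  have : FiniteDimensional ℝ K := FiniteDimensional.span_of_finite ℝ (Set.finite_range v)
  obtain ⟨α, hα⟩ := (Submodule.mem_span_range_iff_exists_fun ℝ).1
    (K.starProjection_apply_mem W)
  exact ⟨α, hα ▸ regRisk_starProjection_le Y L hOm K (fun i => Submodule.subset_span ⟨i, rfl⟩) W⟩

end RegRisk

theorem representer_theorem_general
    (X : Type*) [NormedAddCommGroup X] [InnerProductSpace ℝ X]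
    (n : ℕ) (v : Fin n → X) (Y : Fin n → ℝ) (L : ℝ → ℝ → ℝ)
    (Om : ℝ → ℝ) (hOm : StrictMonoOn Om (Set.Ici 0))
    (hmin : ∃ W₀ : X, ∀ W : X, regRisk v Y L Om W₀ ≤ regRisk v Y L Om W) :
    ∃ α : Fin n → ℝ,
      (∀ W : X, regRisk v Y L Om (∑ i, α i • v i) ≤ regRisk v Y L Om W) ∧
      (∀ β : Fin n → ℝ,
        regRisk v Y L Om (∑ i, β i • v i) =
          (1 / (n : ℝ)) * ∑ i, L ((gramMat v).mulVec β i) (Y i) +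
            Om (β ⬝ᵥ (gramMat v).mulVec β)) ∧
      (∀ β : Fin n → ℝ,
        (1 / (n : ℝ)) * ∑ i, L ((gramMat v).mulVec α i) (Y i) +
            Om (α ⬝ᵥ (gramMat v).mulVec α) ≤
          (1 / (n : ℝ)) * ∑ i, L ((gramMat v).mulVec β i) (Y i) +
            Om (β ⬝ᵥ (gramMat v).mulVec β)) := by
  obtain ⟨W₀, hW₀⟩ := hmin
  obtain ⟨α, hα⟩ := exists_regRisk_sum_smul_le v Y L hOm.monotoneOn W₀
  have hαmin (W : X) : regRisk v Y L Om (∑ i, α i • v i) ≤ regRisk v Y L Om W :=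
    hα.trans (hW₀ W)
  refine ⟨α, hαmin, regRisk_sum_smul v Y L Om, fun β => ?_⟩
  rw [← regRisk_sum_smul, ← regRisk_sum_smul]
  exact hαmin _

/-- Representer theorem.  If the regularized empirical risk attains its
minimum over the Hilbert space `X`, then it attains it at a point of the form
`Ŵ = Σᵢ αᵢ H(Z^{-n+1}_{-i})`; moreover, with `K` the Gram matrix of the features, the
value of the risk at `Σᵢ βᵢ vᵢ` is `(1/n) Σᵢ L((Kβ)ᵢ, Yᵢ) + Ω(βᵀKβ)`, and the vector `α`
minimizes this expression over `ℝⁿ`, so the minimization reduces to the Gram matrix. -/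
theorem representer_theorem
    (X : Type*) [NormedAddCommGroup X] [InnerProductSpace ℝ X] [CompleteSpace X]
    (n : ℕ) (v : Fin n → X) (Y : Fin n → ℝ) (L : ℝ → ℝ → ℝ)
    (Om : ℝ → ℝ) (hOm : StrictMonoOn Om (Set.Ici 0))
    (hmin : ∃ W₀ : X, ∀ W : X, regRisk v Y L Om W₀ ≤ regRisk v Y L Om W) :
    ∃ α : Fin n → ℝ,
      (∀ W : X, regRisk v Y L Om (∑ i, α i • v i) ≤ regRisk v Y L Om W) ∧
      (∀ β : Fin n → ℝ,
        regRisk v Y L Om (∑ i, β i • v i) =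
          (1 / (n : ℝ)) * ∑ i, L ((gramMat v).mulVec β i) (Y i) +
            Om (β ⬝ᵥ (gramMat v).mulVec β)) ∧
      (∀ β : Fin n → ℝ,
        (1 / (n : ℝ)) * ∑ i, L ((gramMat v).mulVec α i) (Y i) +
            Om (α ⬝ᵥ (gramMat v).mulVec α) ≤
          (1 / (n : ℝ)) * ∑ i, L ((gramMat v).mulVec β i) (Y i) +
            Om (β ⬝ᵥ (gramMat v).mulVec β)) :=
  representer_theorem_general X n v Y L Om hOm hmin
end

section
/- For d = 1, M > 0, τ²M² < 1, 0 < λ < √(1 − τ²M²), the Volterra kernel admits the feature expansion K(z, z') = 1 + Σ_j Σ_{i_0, …, i_j ≥ 0} φ_{j, i_0, …, i_j}(z) φ_{j, i_0, …, i_j}(z') for all z, z' ∈ K_M, where φ_{j, i_0, …, i_j}(z) = λ^{j+1} τ^{i_0 + ⋯ + i_j} z_0^{i_0} ⋯ z_{−j}^{i_j} and the multi-series converges absolutely. -/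
/-- The feature functions of the one-dimensional (`d = 1`) Volterra kernel (index `k`
stands for time `-k`). -/
noncomputable def volterraFeature (lam τ : ℝ) (j : ℕ) (i : Fin (j + 1) → ℕ)
    (z : ℕ → ℝ) : ℝ :=
  lam ^ (j + 1) * τ ^ (∑ k, i k) * ∏ k : Fin (j + 1), (z k) ^ (i k)

/-- The one-dimensional Volterra kernel in closed form (index `m` stands for time `-m`). -/
noncomputable def volterraKernel1 (lam τ : ℝ) (z z' : ℕ → ℝ) : ℝ :=
  1 + ∑' k : ℕ, lam ^ (2 * k + 2) *
    ∏ m ∈ Finset.range (k + 1), (1 - τ ^ 2 * z m * z' m)⁻¹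

/-! Since `φ_{j,i}(z) φ_{j,i}(z') = λ^{2j+2} ∏ₖ xₖ^{iₖ}` with `xₖ = τ² zₖ z'ₖ` and
`|xₖ| ≤ τ²M² < 1`, the level-`j` part of the expansion is `λ^{2j+2}` times a product of `j + 1`
geometric series, i.e. the `j`-th term of the kernel. The same computation for absolute values
bounds the level-`j` sum by `(λ² / (1 - τ²M²))^{j+1}`, and `λ² < 1 - τ²M²` makes these bounds
summable in `j`. -/

open Finset

lemma prod_fin_succ_comp_consEquiv {ι R : Type*} [CommMonoid R] {n : ℕ} (g : Fin (n + 1) → ι → R)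
    (p : ι × (Fin n → ι)) :
    ∏ k, g k (Fin.consEquiv (fun _ => ι) p k) = g 0 p.1 * ∏ k : Fin n, g k.succ (p.2 k) := by
  simp [Fin.consEquiv, Fin.prod_univ_succ]

lemma summable_fin_prod_of_nonneg {ι : Type*} {n : ℕ} {g : Fin n → ι → ℝ}
    (hg : ∀ k, Summable (g k)) (hg0 : ∀ k, 0 ≤ g k) :
    Summable fun f : Fin n → ι => ∏ k, g k (f k) := by
  induction n with
  | zero => exact .of_finite
  | succ n ih =>
    have htail := ih (fun k => hg k.succ) (fun k => hg0 k.succ)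
    rw [← (Fin.consEquiv fun _ => ι).summable_iff]
    simpa only [Function.comp_def, prod_fin_succ_comp_consEquiv] using
      (hg 0).mul_of_nonneg htail (hg0 0) fun f => prod_nonneg fun k _ => hg0 k.succ (f k)

lemma hasSum_fin_prod_of_summable_norm {ι R : Type*} [NormedCommRing R] [NormOneClass R]
    [CompleteSpace R] {n : ℕ} {g : Fin n → ι → R} (hg : ∀ k, Summable fun i => ‖g k i‖) :
    HasSum (fun f : Fin n → ι => ∏ k, g k (f k)) (∏ k, ∑' i, g k i) := by
  induction n with
  | zero => simp
  | succ n ih =>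
    have htail : Summable fun f : Fin n → ι => ‖∏ k : Fin n, g k.succ (f k)‖ :=
      (summable_fin_prod_of_nonneg (fun k => hg k.succ) fun k i => norm_nonneg _).of_nonneg_of_le
        (fun f => norm_nonneg _) fun f => norm_prod_le _ _
    have hprod := summable_mul_of_summable_norm (R := R) (hg 0) htail
    have hsplit := (hg 0).of_norm.hasSum.mul (ih fun k => hg k.succ) hprod
    rw [← (Fin.consEquiv fun _ => ι).hasSum_iff, Fin.prod_univ_succ]
    exact hsplit.congr_fun (prod_fin_succ_comp_consEquiv g)

lemma hasSum_fin_prod_geometric {K : Type*} [NormedField K] [CompleteSpace K] {n : ℕ}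
    {x : Fin n → K} (hx : ∀ k, ‖x k‖ < 1) :
    HasSum (fun i : Fin n → ℕ => ∏ k, x k ^ i k) (∏ k, (1 - x k)⁻¹) := by
  simpa only [(hasSum_geometric_of_norm_lt_one (hx _)).tsum_eq] using
    hasSum_fin_prod_of_summable_norm fun k => summable_norm_geometric_of_norm_lt_one (hx k)

lemma prod_inv_one_sub_le_pow_card {ι : Type*} {s : Finset ι} {a : ι → ℝ} {r : ℝ}
    (ha : ∀ i ∈ s, a i ≤ r) (hr : r < 1) :
    ∏ i ∈ s, (1 - a i)⁻¹ ≤ (1 - r)⁻¹ ^ #s := by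
  rw [← prod_const]
  exact prod_le_prod (fun i hi => inv_nonneg.2 (by linarith [ha i hi])) fun i hi =>
    inv_anti₀ (by linarith) (by linarith [ha i hi])

lemma pow_mul_prod_inv_one_sub_le {lam r : ℝ} {a : ℕ → ℝ} (ha : ∀ m, a m ≤ r) (hr : r < 1)
    (j : ℕ) :
    lam ^ (2 * j + 2) * ∏ m ∈ range (j + 1), (1 - a m)⁻¹ ≤ (lam ^ 2 / (1 - r)) ^ (j + 1) := by
  rw [show 2 * j + 2 = 2 * (j + 1) by ring, pow_mul, div_eq_mul_inv, mul_pow]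
  have hprod := prod_inv_one_sub_le_pow_card (s := range (j + 1)) (fun m _ => ha m) hr
  rw [card_range] at hprod
  exact mul_le_mul_of_nonneg_left hprod (by positivity)

lemma abs_sq_mul_mul_le {τ a b M : ℝ} (ha : |a| ≤ M) (hb : |b| ≤ M) :
    |τ ^ 2 * a * b| ≤ τ ^ 2 * M ^ 2 := by
  rw [abs_mul, abs_mul, abs_of_nonneg (sq_nonneg τ), mul_assoc, sq M]
  exact mul_le_mul_of_nonneg_left (mul_le_mul ha hb (abs_nonneg b) ((abs_nonneg a).trans ha))
    (sq_nonneg τ)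

lemma summable_sigma_abs_of_hasSum {α : Type*} {β : α → Type*} {f : (Σ a, β a) → ℝ}
    {b : α → ℝ} (hb : ∀ a, HasSum (fun y => |f ⟨a, y⟩|) (b a)) (hbs : Summable b) :
    Summable fun p => |f p| := by
  rw [summable_sigma_of_nonneg fun p => abs_nonneg (f p)]
  exact ⟨fun a => (hb a).summable, by simpa only [fun a => (hb a).tsum_eq] using hbs⟩

lemma abs_volterraFeature (lam τ : ℝ) (j : ℕ) (i : Fin (j + 1) → ℕ) (z : ℕ → ℝ) :
    |volterraFeature lam τ j i z| = volterraFeature |lam| |τ| j i fun k => |z k| := by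
  simp [volterraFeature, abs_mul, abs_pow, abs_prod]

lemma volterraFeature_mul_volterraFeature (lam τ : ℝ) (j : ℕ) (i : Fin (j + 1) → ℕ)
    (z z' : ℕ → ℝ) :
    volterraFeature lam τ j i z * volterraFeature lam τ j i z' =
      lam ^ (2 * j + 2) * ∏ k : Fin (j + 1), (τ ^ 2 * z k * z' k) ^ i k := by
  simp only [volterraFeature, mul_pow, prod_mul_distrib, prod_pow_eq_pow_sum]
  ring

lemma hasSum_volterraFeature_mul (lam τ : ℝ) (z z' : ℕ → ℝ) (j : ℕ)
    (h : ∀ m, |τ ^ 2 * z m * z' m| < 1) :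
    HasSum (fun i => volterraFeature lam τ j i z * volterraFeature lam τ j i z')
      (lam ^ (2 * j + 2) * ∏ m ∈ range (j + 1), (1 - τ ^ 2 * z m * z' m)⁻¹) := by
  rw [← Fin.prod_univ_eq_prod_range (fun m => (1 - τ ^ 2 * z m * z' m)⁻¹)]
  simpa only [volterraFeature_mul_volterraFeature] using
    (hasSum_fin_prod_geometric fun k : Fin (j + 1) => h k).mul_left (lam ^ (2 * j + 2))

lemma hasSum_abs_volterraFeature_mul (lam τ : ℝ) (z z' : ℕ → ℝ) (j : ℕ)
    (h : ∀ m, |τ ^ 2 * z m * z' m| < 1) :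
    HasSum (fun i => |volterraFeature lam τ j i z * volterraFeature lam τ j i z'|)
      (lam ^ (2 * j + 2) * ∏ m ∈ range (j + 1), (1 - |τ ^ 2 * z m * z' m|)⁻¹) := by
  have h' : ∀ m, |(|τ| ^ 2 * |z m| * |z' m|)| < 1 := fun m => by simpa [abs_mul] using h m
  convert hasSum_volterraFeature_mul |lam| |τ| (|z ·|) (|z' ·|) j h' using 1
  · ext i
    rw [abs_mul, abs_volterraFeature, abs_volterraFeature]
  · have heven : Even (2 * j + 2) := ⟨j + 1, by ring⟩
    simp [heven.pow_abs, abs_mul]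

theorem volterra_kernel_feature_expansion_general (M τ lam : ℝ)
    (hlam0 : 0 < lam) (hlam : lam < Real.sqrt (1 - τ ^ 2 * M ^ 2))
    (z z' : ℕ → ℝ) (hz : ∀ k, |z k| ≤ M) (hz' : ∀ k, |z' k| ≤ M) :
    Summable (fun p : Σ j : ℕ, (Fin (j + 1) → ℕ) =>
      |volterraFeature lam τ p.1 p.2 z * volterraFeature lam τ p.1 p.2 z'|) ∧
    volterraKernel1 lam τ z z' =
      1 + ∑' p : Σ j : ℕ, (Fin (j + 1) → ℕ),
        volterraFeature lam τ p.1 p.2 z * volterraFeature lam τ p.1 p.2 z' := by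
  have hlam2 : lam ^ 2 < 1 - τ ^ 2 * M ^ 2 := (Real.lt_sqrt hlam0.le).1 hlam
  have hr : τ ^ 2 * M ^ 2 < 1 := by linarith [sq_nonneg lam]
  have hxr : ∀ m, |τ ^ 2 * z m * z' m| ≤ τ ^ 2 * M ^ 2 := fun m => abs_sq_mul_mul_le (hz m) (hz' m)
  have hx : ∀ m, |τ ^ 2 * z m * z' m| < 1 := fun m => (hxr m).trans_lt hr
  have hgeom : Summable fun j : ℕ => (lam ^ 2 / (1 - τ ^ 2 * M ^ 2)) ^ (j + 1) :=
    (summable_nat_add_iff 1).2 (summable_geometric_of_lt_one (by positivity)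
      ((div_lt_one (by linarith)).2 hlam2))
  have hsum : Summable (fun p : Σ j : ℕ, (Fin (j + 1) → ℕ) =>
      |volterraFeature lam τ p.1 p.2 z * volterraFeature lam τ p.1 p.2 z'|) :=
    summable_sigma_abs_of_hasSum (fun j => hasSum_abs_volterraFeature_mul lam τ z z' j hx)
      (hgeom.of_nonneg_of_le (fun j => (hasSum_abs_volterraFeature_mul lam τ z z' j hx).nonneg
        fun _ => abs_nonneg _) (pow_mul_prod_inv_one_sub_le hxr hr))
  refine ⟨hsum, ?_⟩
  rw [volterraKernel1, hsum.of_abs.tsum_sigma]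
  exact congrArg _ (tsum_congr fun j => (hasSum_volterraFeature_mul lam τ z z' j hx).tsum_eq.symm)

/-- For `d = 1`, `M > 0`, `τ²M² < 1`, `0 < λ < √(1-τ²M²)`, the Volterra
kernel admits the absolutely convergent feature expansion
`K(z,z') = 1 + Σ_j Σ_{i₀,…,i_j ≥ 0} φ_{j,i₀,…,i_j}(z) φ_{j,i₀,…,i_j}(z')` on `K_M`. -/
theorem volterra_kernel_feature_expansion (M τ lam : ℝ)
    (hM : 0 < M) (hτ : 0 < τ) (hτM : τ ^ 2 * M ^ 2 < 1)
    (hlam0 : 0 < lam) (hlam : lam < Real.sqrt (1 - τ ^ 2 * M ^ 2))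
    (z z' : ℕ → ℝ) (hz : ∀ k, |z k| ≤ M) (hz' : ∀ k, |z' k| ≤ M) :
    Summable (fun p : Σ j : ℕ, (Fin (j + 1) → ℕ) =>
      |volterraFeature lam τ p.1 p.2 z * volterraFeature lam τ p.1 p.2 z'|) ∧
    volterraKernel1 lam τ z z' =
      1 + ∑' p : Σ j : ℕ, (Fin (j + 1) → ℕ),
        volterraFeature lam τ p.1 p.2 z * volterraFeature lam τ p.1 p.2 z' :=
  volterra_kernel_feature_expansion_general M τ lam hlam0 hlam z z' hz hz'
end

section
/- Let (X, ‖·‖) be a complete metric space of states, Z a set of inputs, and F: X × Z → X a map that is a uniform contraction in the state variable: there is 0 ≤ c < 1 with ‖F(x, z) − F(y, z)‖ ≤ c‖x − y‖ for all z ∈ Z. Then F has the echo state property: for every input sequence z ∈ Z^{Z_-} there exists a unique bounded sequence x ∈ X^{Z_-} (bounded meaning contained in some fixed bounded set determined by F) with x_t = F(x_{t−1}, z_t) for all t ∈ Z_-, provided sup_{z ∈ Z} ‖F(x_0, z) − x_0‖ < ∞ for some x_0 ∈ X. -/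
/-! The state sequences `x : ℕ → X` solving `x n = F (x (n + 1)) (z n)` are exactly the fixed
points of the shift-and-update map `x ↦ (n ↦ F (x (n + 1)) (z n))`. On bounded sequences with the
sup metric this map is a contraction with the same constant as `F`, and the orbit bound at `x₀`
makes it preserve boundedness; the Banach fixed point theorem on the complete space `ℕ →ᵇ X` then
gives existence and uniqueness at once. -/

open Set Bornology Metric NNReal

namespace BoundedContinuousFunction

variable {α β : Type*} [TopologicalSpace α] [DiscreteTopology α] [PseudoMetricSpace β]

noncomputable def ofIsBoundedRange (f : α → β) (hf : IsBounded (range f)) : α →ᵇ β :=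
  mkOfDiscrete f _ (isBounded_range_iff.1 hf).choose_spec

@[simp]
theorem coe_ofIsBoundedRange (f : α → β) (hf : IsBounded (range f)) :
    ⇑(ofIsBoundedRange f hf) = f :=
  rfl

end BoundedContinuousFunction

open BoundedContinuousFunction

section EchoState

variable {X Z : Type*} [MetricSpace X] {F : X → Z → X} {K : ℝ≥0} {x₀ : X}

def echoStep (F : X → Z → X) (z : ℕ → Z) (x : ℕ → X) : ℕ → X :=
  fun n => F (x (n + 1)) (z n)

theorem isBounded_range_echoStep (hF : ∀ z, LipschitzWith K (F · z))
    (hx₀ : IsBounded (range (F x₀))) (z : ℕ → Z) {x : ℕ → X} (hx : IsBounded (range x)) :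
    IsBounded (range (echoStep F z x)) := by
  obtain ⟨r, hr⟩ := (isBounded_iff_subset_closedBall x₀).1 hx
  obtain ⟨C, hC⟩ := (isBounded_iff_subset_closedBall x₀).1 hx₀
  refine (isBounded_iff_subset_closedBall x₀).2 ⟨K * r + C, range_subset_iff.2 fun n => ?_⟩
  have hxn : dist (x (n + 1)) x₀ ≤ r := hr (mem_range_self _)
  have hFz : dist (F x₀ (z n)) x₀ ≤ C := hC (mem_range_self _)
  calc dist (F (x (n + 1)) (z n)) x₀
      ≤ dist (F (x (n + 1)) (z n)) (F x₀ (z n)) + dist (F x₀ (z n)) x₀ := dist_triangle _ _ _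
    _ ≤ K * r + C := by
      gcongr
      exact ((hF (z n)).dist_le_mul _ _).trans (by gcongr)

noncomputable def echoMap (hF : ∀ z, LipschitzWith K (F · z)) (hx₀ : IsBounded (range (F x₀)))
    (z : ℕ → Z) (x : ℕ →ᵇ X) : ℕ →ᵇ X :=
  ofIsBoundedRange (echoStep F z x) (isBounded_range_echoStep hF hx₀ z x.isBounded_range)

theorem lipschitzWith_echoMap (hF : ∀ z, LipschitzWith K (F · z))
    (hx₀ : IsBounded (range (F x₀))) (z : ℕ → Z) : LipschitzWith K (echoMap hF hx₀ z) :=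
  LipschitzWith.of_dist_le_mul fun x y => (dist_le (by positivity)).2 fun n =>
    ((hF (z n)).dist_le_mul _ _).trans (by gcongr; exact dist_coe_le_dist _)

theorem existsUnique_bounded_echoState [CompleteSpace X] (hK : K < 1)
    (hF : ∀ z, LipschitzWith K (F · z)) (hx₀ : IsBounded (range (F x₀))) (z : ℕ → Z) :
    ∃! x : ℕ → X, IsBounded (range x) ∧ ∀ n, x n = F (x (n + 1)) (z n) := by
  have hT : ContractingWith K (echoMap hF hx₀ z) := ⟨hK, lipschitzWith_echoMap hF hx₀ z⟩
  have : Nonempty (ℕ →ᵇ X) := ⟨const ℕ x₀⟩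
  set p := ContractingWith.fixedPoint _ hT
  refine ⟨p, ⟨p.isBounded_range, fun n => ?_⟩, ?_⟩
  · exact (DFunLike.congr_fun hT.fixedPoint_isFixedPt n).symm
  · rintro y ⟨hy, hrec⟩
    have hfix : Function.IsFixedPt (echoMap hF hx₀ z) (ofIsBoundedRange y hy) :=
      DFunLike.ext _ _ fun n => (hrec n).symm
    exact congrArg (⇑) (hT.fixedPoint_unique hfix)

end EchoState

/-- Echo state property of uniform state contractions.  Let `X` be a
complete normed space of states, `Z` a set of inputs, and `F : X × Z → X` a uniform
contraction in the state variable with constant `c < 1`, such that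
`sup_z ‖F(x₀, z) - x₀‖ < ∞` for some `x₀`.  Then `F` has the echo state property: for
every semi-infinite input sequence (indexed by depth, index `n` standing for time `-n`)
there is a unique bounded state sequence solving `x_t = F(x_{t-1}, z_t)` for all `t ≤ 0`,
i.e. `x n = F (x (n+1)) (z n)` for all `n`. -/
theorem echo_state_property_of_contraction
    (X : Type*) [NormedAddCommGroup X] [CompleteSpace X] (Z : Type*)
    (F : X → Z → X) (c : ℝ) (hc0 : 0 ≤ c) (hc1 : c < 1)
    (hcontr : ∀ (z : Z) (x y : X), ‖F x z - F y z‖ ≤ c * ‖x - y‖)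
    (hbdd : ∃ (x₀ : X) (C : ℝ), ∀ z : Z, ‖F x₀ z - x₀‖ ≤ C) :
    ∀ z : ℕ → Z, ∃! x : ℕ → X,
      (∃ B : ℝ, ∀ n, ‖x n‖ ≤ B) ∧ (∀ n, x n = F (x (n + 1)) (z n)) := by
  obtain ⟨x₀, C, hC⟩ := hbdd
  have hF : ∀ z, LipschitzWith ⟨c, hc0⟩ (F · z) := fun z =>
    LipschitzWith.of_dist_le_mul fun x y => by rw [dist_eq_norm, dist_eq_norm]; exact hcontr z x y
  have hx₀ : IsBounded (range (F x₀)) :=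
    (isBounded_iff_subset_closedBall x₀).2
      ⟨C, range_subset_iff.2 fun z => mem_closedBall_iff_norm.2 (hC z)⟩
  intro z
  simpa only [isBounded_iff_forall_norm_le, forall_mem_range] using
    existsUnique_bounded_echoState (K := ⟨c, hc0⟩) hc1 hF hx₀ z
end

section
/- Let F, X, Z be as above with F a uniform state contraction with constant c < 1, and assume F(·, z) is continuous for each z and Z is a compact metric space with F jointly continuous. Then the associated state functional H: Z^{Z_-} → X (assigning to each input its unique bounded solution evaluated at time 0) is continuous when Z^{Z_-} carries the product topology; i.e., the reservoir filter has the fading memory property. -/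
/-!
Let `H_N z = truncatedState F N z` be the state at time `0` obtained by running the recursion
from the state `0` at time `-N`; it depends continuously on the finitely many inputs `z_{-N+1}, …, z_0`. Contraction
gives `‖H z - H_N z‖ ≤ c ^ N ‖x_{-N}‖`, and compactness of `Z` bounds every bounded solution by
`sup_z ‖F 0 z‖ / (1 - c)`, so `H_N → H` uniformly and `H` is continuous.
-/

open Filter Topology

theorem le_div_one_sub_of_le_mul_succ_add {a : ℕ → ℝ} {c M : ℝ} (ha : BddAbove (Set.range a))
    (hc0 : 0 ≤ c) (hc1 : c < 1) (h : ∀ n, a n ≤ c * a (n + 1) + M) (n : ℕ) :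
    a n ≤ M / (1 - c) := by
  have hsup : ⨆ k, a k ≤ c * (⨆ k, a k) + M :=
    ciSup_le fun k => (h k).trans (by gcongr; exact le_ciSup ha (k + 1))
  calc a n ≤ ⨆ k, a k := le_ciSup ha n
    _ ≤ M / (1 - c) := by rw [le_div_iff₀ (by linarith)]; linarith

section Reservoir

variable {X : Type*} [SeminormedAddCommGroup X] {Z : Type*}

/-- Inputs are indexed by depth, so `z ∘ Nat.succ` is the input sequence seen from time `-1`. -/
def truncatedState (F : X → Z → X) : ℕ → (ℕ → Z) → X
  | 0, _ => 0
  | N + 1, z => F (truncatedState F N (z ∘ Nat.succ)) (z 0)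

theorem continuous_truncatedState [TopologicalSpace Z] {F : X → Z → X}
    (hF : Continuous fun p : X × Z => F p.1 p.2) (N : ℕ) : Continuous (truncatedState F N) := by
  induction N with
  | zero => exact continuous_const
  | succ N ih =>
    have hshift : Continuous fun z : ℕ → Z => z ∘ Nat.succ :=
      continuous_pi fun n => continuous_apply (n + 1)
    exact hF.comp ((ih.comp hshift).prodMk (continuous_apply 0))

variable {F : X → Z → X} {c : ℝ}

theorem norm_sub_truncatedState_le (hc0 : 0 ≤ c)
    (hcontr : ∀ (z : Z) (x y : X), ‖F x z - F y z‖ ≤ c * ‖x - y‖)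
    {z : ℕ → Z} {x : ℕ → X} (hx : ∀ n, x n = F (x (n + 1)) (z n)) (N : ℕ) :
    ‖x 0 - truncatedState F N z‖ ≤ c ^ N * ‖x N‖ := by
  induction N generalizing z x with
  | zero => simp [truncatedState]
  | succ N ih =>
    have hshift := ih (z := z ∘ Nat.succ) (x := x ∘ Nat.succ) fun n => hx (n + 1)
    calc ‖x 0 - truncatedState F (N + 1) z‖
        = ‖F (x 1) (z 0) - F (truncatedState F N (z ∘ Nat.succ)) (z 0)‖ := by
          rw [hx 0, truncatedState]
      _ ≤ c * ‖x 1 - truncatedState F N (z ∘ Nat.succ)‖ := hcontr _ _ _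
      _ ≤ c * (c ^ N * ‖x (N + 1)‖) := by gcongr; exact hshift
      _ = c ^ (N + 1) * ‖x (N + 1)‖ := by ring

theorem norm_le_of_bddAbove_of_contraction {M : ℝ} (hc0 : 0 ≤ c) (hc1 : c < 1)
    (hcontr : ∀ (z : Z) (x y : X), ‖F x z - F y z‖ ≤ c * ‖x - y‖) (hM : ∀ z, ‖F 0 z‖ ≤ M)
    {z : ℕ → Z} {x : ℕ → X} (hx : ∀ n, x n = F (x (n + 1)) (z n))
    (hbdd : BddAbove (Set.range fun n => ‖x n‖)) (n : ℕ) :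
    ‖x n‖ ≤ M / (1 - c) := by
  refine le_div_one_sub_of_le_mul_succ_add hbdd hc0 hc1 (fun m => ?_) n
  calc ‖x m‖ = ‖(F (x (m + 1)) (z m) - F 0 (z m)) + F 0 (z m)‖ := by rw [sub_add_cancel, ← hx m]
    _ ≤ ‖F (x (m + 1)) (z m) - F 0 (z m)‖ + ‖F 0 (z m)‖ := norm_add_le _ _
    _ ≤ c * ‖x (m + 1)‖ + M := by
      gcongr
      · simpa using hcontr (z m) (x (m + 1)) 0
      · exact hM (z m)

end Reservoir

theorem fading_memory_of_contraction_general
    (X : Type*) [NormedAddCommGroup X]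
    (Z : Type*) [MetricSpace Z] [CompactSpace Z]
    (F : X → Z → X) (c : ℝ) (hc0 : 0 ≤ c) (hc1 : c < 1)
    (hF : Continuous (fun p : X × Z => F p.1 p.2))
    (hcontr : ∀ (z : Z) (x y : X), ‖F x z - F y z‖ ≤ c * ‖x - y‖)
    (Hst : (ℕ → Z) → X)
    (hHst : ∀ z : ℕ → Z, ∃ x : ℕ → X,
      (∃ B : ℝ, ∀ n, ‖x n‖ ≤ B) ∧ (∀ n, x n = F (x (n + 1)) (z n)) ∧ Hst z = x 0) :
    Continuous Hst := by
  obtain ⟨M, hM⟩ : ∃ M, ∀ z, ‖F 0 z‖ ≤ M := by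
    simpa using isCompact_univ.exists_bound_of_continuousOn
      (hF.comp (continuous_const.prodMk continuous_id)).continuousOn
  have hrate : Tendsto (fun N => c ^ N * (M / (1 - c))) atTop (𝓝 0) := by
    simpa using (tendsto_pow_atTop_nhds_zero_of_lt_one hc0 hc1).mul_const (M / (1 - c))
  have huniform : TendstoUniformly (truncatedState F) Hst atTop := by
    refine Metric.tendstoUniformly_iff.2 fun ε hε => ?_
    filter_upwards [hrate.eventually_lt_const hε] with N hN z
    obtain ⟨x, ⟨B, hB⟩, hx, hHz⟩ := hHst z
    have hbound := norm_le_of_bddAbove_of_contraction hc0 hc1 hcontr hM hx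
      ⟨B, Set.forall_mem_range.2 hB⟩ N
    calc dist (Hst z) (truncatedState F N z) = ‖x 0 - truncatedState F N z‖ := by
          rw [hHz, dist_eq_norm]
      _ ≤ c ^ N * ‖x N‖ := norm_sub_truncatedState_le hc0 hcontr hx N
      _ ≤ c ^ N * (M / (1 - c)) := by gcongr
      _ < ε := hN
  exact huniform.continuous (Frequently.of_forall (continuous_truncatedState hF))

/-- Fading memory property of contractive reservoir functionals.  Let `X`
be a complete normed space of states, `Z` a compact metric space of inputs, and
`F : X × Z → X` jointly continuous and a uniform contraction in the state variable with
constant `c < 1`.  Let `Hst` be the associated state functional: `Hst z = x 0` where `x`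
is the unique bounded solution of the state recursion `x_t = F(x_{t-1}, z_t)` (sequences
indexed by depth: index `n` stands for time `-n`).  Then `Hst` is continuous for the
product topology on `Z^{ℤ₋}`, i.e. the reservoir filter has the fading memory property. -/
theorem fading_memory_of_contraction
    (X : Type*) [NormedAddCommGroup X] [CompleteSpace X]
    (Z : Type*) [MetricSpace Z] [CompactSpace Z]
    (F : X → Z → X) (c : ℝ) (hc0 : 0 ≤ c) (hc1 : c < 1)
    (hF : Continuous (fun p : X × Z => F p.1 p.2))
    (hcontr : ∀ (z : Z) (x y : X), ‖F x z - F y z‖ ≤ c * ‖x - y‖)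
    (Hst : (ℕ → Z) → X)
    (hHst : ∀ z : ℕ → Z, ∃ x : ℕ → X,
      (∃ B : ℝ, ∀ n, ‖x n‖ ≤ B) ∧ (∀ n, x n = F (x (n + 1)) (z n)) ∧ Hst z = x 0) :
    Continuous Hst :=
  fading_memory_of_contraction_general X Z F c hc0 hc1 hF hcontr Hst hHst
end
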